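/- arXiv:1206.0265 — 2 statements merged into one kernel-verified Lean document; each statement's English description precedes it below -/
import Mathlib

section
/- Let f : ℝ^N → [−∞, ∞] be a quasiconvex function. Then the pointwise infimum of f over U equals the essential infimum of f over U for every density open set U ⊆ ℝ^N if and only if the pointwise infimum of f over ℝ^N equals the essential infimum of f over ℝ^N. -/
open MeasureTheory Metric Filter

/-- A set `U ⊆ ℝ^N` is density open if it is Lebesgue measurable and every point of `U`
is a Lebesgue density point of `U`. -/
def DensityOpen {N : ℕ} (U : Set (EuclideanSpace ℝ (Fin N))) : Prop :=
  NullMeasurableSet U volume ∧ ∀ x ∈ U,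
    Tendsto (fun r : ℝ => volume (U ∩ ball x r) / volume (ball x r))
      (nhdsWithin 0 (Set.Ioi 0)) (nhds 1)

/-!
Pointwise and essential infimum agree on a set `U` as soon as, for every `x ∈ U` and every
real `a > f x`, the sublevel set `{f < a}` meets `U` in a set of positive measure. When
`inf f = ess inf f` globally, each such sublevel set has positive measure; being convex, it then
has nonempty interior, so it contains a cone with apex `x` over a small ball and therefore has
positive lower density at `x`. Since `x` is a density point of `U`, the two sets must overlap
in positive measure.
-/

open Set
open scoped ENNReal Topology

lemma biInf_le_essInf_restrict {α β : Type*} [MeasurableSpace α] [CompleteLattice β]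
    {μ : Measure α} {U : Set α} (hU : NullMeasurableSet U μ) (f : α → β) :
    ⨅ x ∈ U, f x ≤ essInf f (μ.restrict U) :=
  le_essInf_of_ae_le _ <| (ae_restrict_mem₀ hU).mono fun _ hx => iInf₂_le _ hx

lemma measure_setOf_lt_ne_zero_of_iInf_eq_essInf {α β : Type*} [MeasurableSpace α]
    [CompleteLinearOrder β] {μ : Measure α} {f : α → β} (h : ⨅ x, f x = essInf f μ) {x : α}
    {a : β} (hxa : f x < a) : μ {y | f y < a} ≠ 0 := by
  intro hnull
  have ha : a ≤ essInf f μ :=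
    le_essInf_of_ae_le _ <| ae_iff.2 <| by simpa only [not_le] using hnull
  exact (ha.trans (h ▸ iInf_le f x)).not_gt hxa

lemma measure_inter_ne_zero_of_tendsto_density {α : Type*} [PseudoMetricSpace α]
    [MeasurableSpace α] [OpensMeasurableSpace α] {μ : Measure α} {U S : Set α} {x : α}
    (hU : NullMeasurableSet U μ)
    (hUx : Tendsto (fun r => μ (U ∩ ball x r) / μ (ball x r)) (𝓝[>] 0) (𝓝 1))
    {c : ℝ≥0∞} (hc : c ≠ 0) (hSx : ∀ᶠ r in 𝓝[>] 0, c ≤ μ (S ∩ ball x r) / μ (ball x r)) :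
    μ (S ∩ U) ≠ 0 := by
  intro hSU
  have hUx_le : ∀ᶠ r in 𝓝[>] 0, μ (U ∩ ball x r) / μ (ball x r) ≤ 1 - c := by
    filter_upwards [hSx] with r hr
    set B := ball x r
    have hsum : μ (S ∩ B) + μ (U ∩ B) ≤ μ B := by
      have hdisj : AEDisjoint μ (S ∩ B) (U ∩ B) :=
        measure_mono_null (inter_subset_inter inter_subset_left inter_subset_left) hSU
      rw [← measure_union₀ (hU.inter measurableSet_ball.nullMeasurableSet) hdisj]
      exact measure_mono (union_subset inter_subset_right inter_subset_right)
    have hle : c + μ (U ∩ B) / μ B ≤ 1 :=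
      calc c + μ (U ∩ B) / μ B ≤ μ (S ∩ B) / μ B + μ (U ∩ B) / μ B := by gcongr
        _ = (μ (S ∩ B) + μ (U ∩ B)) / μ B := ENNReal.div_add_div_same
        _ ≤ μ B / μ B := ENNReal.div_le_div_right hsum _
        _ ≤ 1 := ENNReal.div_self_le_one
    exact ENNReal.le_sub_of_add_le_left (ne_top_of_le_ne_top ENNReal.one_ne_top
      (le_self_add.trans hle)) hle
  exact (ENNReal.sub_lt_self ENNReal.one_ne_top one_ne_zero hc).not_ge (le_of_tendsto hUx hUx_le)

section

variable {E : Type*} [NormedAddCommGroup E] [NormedSpace ℝ E] {S : Set E}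

lemma Convex.homothety_image_ball_subset (hS : Convex ℝ S) {x y : E} (hx : x ∈ S) {δ : ℝ}
    (hball : ball y δ ⊆ S) {t : ℝ} (ht₀ : 0 < t) (ht₁ : t ≤ 1) :
    AffineMap.homothety x t '' ball y δ ⊆ S ∩ ball x (t * (δ + dist y x)) := by
  rintro _ ⟨z, hz, rfl⟩
  refine ⟨?_, ?_⟩
  · rw [AffineMap.homothety_eq_lineMap]
    exact hS.lineMap_mem hx (hball hz) ⟨ht₀.le, ht₁⟩
  · rw [mem_ball, dist_homothety_center, Real.norm_of_nonneg ht₀.le, dist_comm x z]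
    gcongr
    exact (dist_triangle z y x).trans_lt (by rw [mem_ball] at hz; linarith)

variable [MeasurableSpace E] [BorelSpace E] [FiniteDimensional ℝ E] (μ : Measure E)
  [μ.IsAddHaarMeasure]

lemma Convex.interior_nonempty_of_measure_ne_zero (hS : Convex ℝ S) (hμS : μ S ≠ 0) :
    (interior S).Nonempty := by
  by_contra hint
  refine hμS (measure_mono_null (fun y hy => ?_) (hS.addHaar_frontier μ))
  rw [not_nonempty_iff_eq_empty] at hint
  exact ⟨subset_closure hy, by simp [hint]⟩

lemma Convex.measure_ball_div_le_measure_inter_ball_div (hS : Convex ℝ S) {x y : E}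
    (hx : x ∈ S) {δ : ℝ} (hball : ball y δ ⊆ S) {r : ℝ} (hr₀ : 0 < r)
    (hrR : r ≤ δ + dist y x) :
    μ (ball y δ) / μ (ball x (δ + dist y x)) ≤ μ (S ∩ ball x r) / μ (ball x r) := by
  set R := δ + dist y x
  set t := r / R
  have hR : 0 < R := hr₀.trans_le hrR
  have ht₀ : 0 < t := div_pos hr₀ hR
  have hr : r = t * R := (div_mul_cancel₀ r hR.ne').symm
  set k := ENNReal.ofReal (t ^ Module.finrank ℝ E)
  have hk : k ≠ 0 := ENNReal.ofReal_ne_zero_iff.2 (by positivity)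
  have hball_r : μ (ball x r) = k * μ (ball x R) := by
    rw [hr, Measure.addHaar_ball_mul_of_pos μ x ht₀, Measure.addHaar_ball_center μ x]
  have hinter : k * μ (ball y δ) ≤ μ (S ∩ ball x r) :=
    calc k * μ (ball y δ) = μ (AffineMap.homothety x t '' ball y δ) := by
          rw [Measure.addHaar_image_homothety, abs_of_pos (pow_pos ht₀ _)]
      _ ≤ μ (S ∩ ball x r) := hr ▸ measure_mono
          (hS.homothety_image_ball_subset hx hball ht₀ ((div_le_one hR).2 hrR))
  rw [hball_r, ← ENNReal.mul_div_mul_left _ _ hk ENNReal.ofReal_ne_top]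
  exact ENNReal.div_le_div_right hinter _

lemma Convex.exists_density_lower_bound (hS : Convex ℝ S) (hμS : μ S ≠ 0) {x : E} (hx : x ∈ S) :
    ∃ c ≠ 0, ∀ᶠ r in 𝓝[>] 0, c ≤ μ (S ∩ ball x r) / μ (ball x r) := by
  obtain ⟨y, hy⟩ := hS.interior_nonempty_of_measure_ne_zero μ hμS
  obtain ⟨δ, hδ, hball⟩ := isOpen_iff.1 isOpen_interior y hy
  have hR : 0 < δ + dist y x := by positivity
  refine ⟨μ (ball y δ) / μ (ball x (δ + dist y x)),
    (ENNReal.div_pos_iff.2 ⟨(measure_ball_pos μ y hδ).ne', measure_ball_lt_top.ne⟩).ne', ?_⟩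
  filter_upwards [Ioo_mem_nhdsGT hR] with r hr
  exact hS.measure_ball_div_le_measure_inter_ball_div μ hx (hball.trans interior_subset) hr.1
    hr.2.le

lemma essInf_restrict_le_of_tendsto_density {f : E → EReal}
    (hf : ∀ a : ℝ, Convex ℝ {x | f x < (a : EReal)}) (hfμ : ⨅ x, f x = essInf f μ)
    {U : Set E} (hU : NullMeasurableSet U μ) {x : E}
    (hUx : Tendsto (fun r => μ (U ∩ ball x r) / μ (ball x r)) (𝓝[>] 0) (𝓝 1)) :
    essInf f (μ.restrict U) ≤ f x := by
  by_contra! hlt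
  obtain ⟨a, hxa, ha⟩ := EReal.exists_between_coe_real hlt
  have hSU : μ ({y | f y < a} ∩ U) = 0 := by
    rw [← Measure.restrict_apply₀' hU]
    exact measure_mono_null (fun _ hy => lt_asymm hy) (ae_iff.1 (ae_lt_of_lt_essInf ha))
  obtain ⟨c, hc, hSx⟩ := (hf a).exists_density_lower_bound μ
    (measure_setOf_lt_ne_zero_of_iInf_eq_essInf hfμ hxa) hxa
  exact measure_inter_ne_zero_of_tendsto_density hU hUx hc hSx hSU

end

lemma densityOpen_univ {N : ℕ} : DensityOpen (univ : Set (EuclideanSpace ℝ (Fin N))) := by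
  refine ⟨nullMeasurableSet_univ, fun x _ => tendsto_const_nhds.congr' ?_⟩
  filter_upwards [self_mem_nhdsWithin] with r hr
  rw [univ_inter, ENNReal.div_self (measure_ball_pos _ _ hr).ne' measure_ball_lt_top.ne]

theorem stmt_5 {N : ℕ} (f : EuclideanSpace ℝ (Fin N) → EReal)
    (hf : ∀ α : ℝ, Convex ℝ {x | f x < (α : EReal)}) :
    (∀ U : Set (EuclideanSpace ℝ (Fin N)), DensityOpen U →
        (⨅ x ∈ U, f x) = essInf f (volume.restrict U)) ↔
      (⨅ x, f x) = essInf f volume := by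
  refine ⟨fun h => by simpa using h univ densityOpen_univ, fun hglobal U hU => ?_⟩
  exact le_antisymm (biInf_le_essInf_restrict hU.1 f) <| le_iInf₂ fun x hx =>
    essInf_restrict_le_of_tendsto_density volume hf hglobal hU.1 (hU.2 x hx)
end

section
/- Let f, g : ℝ^N → ℝ be quasiconvex functions such that f = g almost everywhere with respect to Lebesgue measure, and let m ∈ [−∞, ∞) denote their common essential infimum over ℝ^N. For x ∈ ℝ^N, the point x is a point of continuity of g but not a point of continuity of f if and only if: x is a point of continuity of g, m is finite, g(x) = m, and x belongs to the union over real α < m of the closures of the sublevel sets F_α := {y ∈ ℝ^N : f(y) < α}. -/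
open MeasureTheory Metric Filter

/-!
A convex set `A` of positive Lebesgue measure has nonempty interior, so if `A` agrees a.e. with
a set `B`, then `closure A ⊆ closure B` and `interior B ⊆ interior A`. For the sublevel sets
`{f < α}` and `{g < α}`, which have positive measure once `α > m`, this makes `f` upper
semicontinuous at every continuity point `x` of `g`, and keeps `x` out of `closure {f < α}` for
`m < α < g x`. So at such a point `f` can only fail to be continuous through
`x ∈ closure {f < α}` for some `α < g x`; since `m ≤ g x`, this forces `g x = m` and `α < m`.
-/

open Set Topology Measure

theorem notMem_closure_setOf_lt_iff {X β : Type*} [TopologicalSpace X] [LinearOrder β]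
    {f : X → β} {x : X} {α : β} :
    x ∉ closure {y | f y < α} ↔ ∀ᶠ y in 𝓝 x, α ≤ f y := by
  simp only [mem_closure_iff_frequently, not_frequently, mem_ofPred_eq, not_lt]

theorem ae_eq_setOf_lt {X β : Type*} [MeasurableSpace X] [LT β] {μ : Measure X} {f g : X → β}
    (hfg : f =ᵐ[μ] g) (α : β) : {y | f y < α} =ᵐ[μ] {y | g y < α} :=
  eventuallyEq_set.2 (hfg.mono fun y hy => by simp only [mem_ofPred_eq, hy])

theorem measure_setOf_lt_ne_zero_of_essInf_lt {X : Type*} [MeasurableSpace X] {μ : Measure X}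
    {f : X → ℝ} {α : ℝ} (h : essInf (fun y => (f y : EReal)) μ < α) :
    μ {y | f y < α} ≠ 0 := by
  contrapose! h
  refine le_essInf_of_ae_le _ ((measure_eq_zero_iff_ae_notMem.1 h).mono fun y hy => ?_)
  simpa using hy

section IsOpenPosMeasure

variable {X : Type*} [TopologicalSpace X] [MeasurableSpace X] {μ : Measure X}
  [μ.IsOpenPosMeasure]

theorem interior_subset_closure_of_ae_le {s t : Set X} (h : s ≤ᵐ[μ] t) :
    interior s ⊆ closure t := by
  refine sdiff_eq_empty.1 <|
    (isOpen_interior.sdiff isClosed_closure).eq_empty_of_measure_zero (μ := μ) ?_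
  exact measure_mono_null (sdiff_subset_sdiff interior_subset subset_closure) (ae_le_set.1 h)

theorem ContinuousAt.eq_of_ae_eq {Y : Type*} [TopologicalSpace Y] [T2Space Y] {f g : X → Y}
    {x : X} (hf : ContinuousAt f x) (hg : ContinuousAt g x) (hfg : f =ᵐ[μ] g) : f x = g x := by
  by_contra hne
  exact (measure_pos_of_mem_nhds μ ((hf.ne_iff_eventually_ne hg).1 hne)).ne' (ae_iff.1 hfg)

theorem essInf_le_of_continuousAt {β : Type*} [CompleteLinearOrder β] [TopologicalSpace β]
    [OrderTopology β] [FirstCountableTopology β] {g : X → β} {x : X} (hg : ContinuousAt g x) :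
    essInf g μ ≤ g x := by
  by_contra! hlt
  exact (measure_pos_of_mem_nhds μ (hg.eventually (eventually_lt_nhds hlt))).ne' meas_lt_essInf

end IsOpenPosMeasure

section AddHaar

variable {E : Type*} [NormedAddCommGroup E] [NormedSpace ℝ E] [MeasurableSpace E] [BorelSpace E]
  [FiniteDimensional ℝ E] {μ : Measure E} [μ.IsAddHaarMeasure]

namespace Convex

variable {s t : Set E}

theorem interior_nonempty_of_measure_ne_zero_s13 (hs : Convex ℝ s) (hμ : μ s ≠ 0) :
    (interior s).Nonempty := by
  by_contra! h
  refine hμ (measure_mono_null (fun y hy => ?_) (hs.addHaar_frontier μ))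
  exact show y ∈ frontier s from ⟨subset_closure hy, by simp [h]⟩

theorem closure_subset_closure_of_ae_le (hs : Convex ℝ s) (hμ : μ s ≠ 0) (h : s ≤ᵐ[μ] t) :
    closure s ⊆ closure t := by
  rw [← hs.closure_interior_eq_closure_of_nonempty_interior
    (hs.interior_nonempty_of_measure_ne_zero_s13 hμ)]
  exact closure_minimal (interior_subset_closure_of_ae_le h) isClosed_closure

theorem interior_subset_interior_of_ae_le (hs : Convex ℝ s) (hμ : μ s ≠ 0) (h : t ≤ᵐ[μ] s) :
    interior t ⊆ interior s := by
  rw [← hs.interior_closure_eq_interior_of_nonempty_interior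
    (hs.interior_nonempty_of_measure_ne_zero_s13 hμ)]
  exact interior_maximal (interior_subset_closure_of_ae_le h) isOpen_interior

end Convex

variable {f g : E → ℝ} {x : E} {α : ℝ}

theorem eventually_lt_of_ae_eq_of_continuousAt (hf : Convex ℝ {y | f y < α})
    (hfg : f =ᵐ[μ] g) (hg : ContinuousAt g x) (hα : g x < α) : ∀ᶠ y in 𝓝 x, f y < α := by
  have hnhds : {y | g y < α} ∈ 𝓝 x := hg.eventually (eventually_lt_nhds hα)
  have hμ : μ {y | f y < α} ≠ 0 := by
    rw [measure_congr (ae_eq_setOf_lt hfg α)]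
    exact (measure_pos_of_mem_nhds μ hnhds).ne'
  rw [← mem_interior_iff_mem_nhds] at hnhds
  exact mem_interior_iff_mem_nhds.1
    (hf.interior_subset_interior_of_ae_le hμ (ae_eq_setOf_lt hfg α).symm.le hnhds)

theorem notMem_closure_setOf_lt_of_ae_eq_of_continuousAt (hf : Convex ℝ {y | f y < α})
    (hμ : μ {y | f y < α} ≠ 0) (hfg : f =ᵐ[μ] g) (hg : ContinuousAt g x) (hα : α < g x) :
    x ∉ closure {y | f y < α} := fun hx => by
  have hxg := hf.closure_subset_closure_of_ae_le hμ (ae_eq_setOf_lt hfg α).le hx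
  exact notMem_closure_setOf_lt_iff.2 (hg.eventually (eventually_ge_nhds hα)) hxg

theorem continuousAt_iff_forall_notMem_closure_setOf_lt (hf : ∀ α : ℝ, Convex ℝ {y | f y < α})
    (hfg : f =ᵐ[μ] g) (hg : ContinuousAt g x) :
    ContinuousAt f x ↔ ∀ α : ℝ, α < g x → x ∉ closure {y | f y < α} := by
  refine ⟨fun hfc α hα => ?_, fun h => ?_⟩
  · rw [← hfc.eq_of_ae_eq hg hfg] at hα
    exact notMem_closure_setOf_lt_iff.2 (hfc.eventually (eventually_ge_nhds hα))
  refine continuousAt_of_tendsto_nhds (y := g x) <|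
    tendsto_order.2 ⟨fun a ha => ?_, fun b hb => ?_⟩
  · obtain ⟨α, haα, hα⟩ := exists_between ha
    exact (notMem_closure_setOf_lt_iff.1 (h α hα)).mono fun y hy => haα.trans_le hy
  · obtain ⟨α, hα, hαb⟩ := exists_between hb
    exact (eventually_lt_of_ae_eq_of_continuousAt (hf α) hfg hg hα).mono fun y hy => hy.trans hαb

theorem essInf_eq_of_mem_closure_setOf_lt (hf : ∀ α : ℝ, Convex ℝ {y | f y < α})
    (hfg : f =ᵐ[μ] g) (hg : ContinuousAt g x) (hα : α < g x) (hx : x ∈ closure {y | f y < α}) :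
    essInf (fun y => (f y : EReal)) μ = g x := by
  refine le_antisymm ?_ (not_lt.1 fun hlt => ?_)
  · refine (essInf_congr_ae (hfg.fun_comp ((↑) : ℝ → EReal))).trans_le ?_
    exact essInf_le_of_continuousAt (continuous_coe_real_ereal.continuousAt.comp hg)
  obtain ⟨β, hβ, hβg⟩ := EReal.exists_between_coe_real hlt
  have hmax : essInf (fun y => (f y : EReal)) μ < ↑(max α β) :=
    hβ.trans_le (EReal.coe_le_coe_iff.2 (le_max_right α β))
  have hx' : x ∈ closure {y | f y < max α β} :=
    closure_mono (fun y (hy : f y < α) => lt_max_of_lt_left hy) hx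
  exact notMem_closure_setOf_lt_of_ae_eq_of_continuousAt (hf _)
    (measure_setOf_lt_ne_zero_of_essInf_lt hmax) hfg hg
    (max_lt hα (EReal.coe_lt_coe_iff.1 hβg)) hx'

end AddHaar

theorem stmt_13_general {N : ℕ} (f g : EuclideanSpace ℝ (Fin N) → ℝ)
    (hf : ∀ α : ℝ, Convex ℝ {x | f x < α})
    (hfg : f =ᵐ[volume] g) (m : EReal)
    (hm : m = essInf (fun x => (f x : EReal)) volume)
    (x : EuclideanSpace ℝ (Fin N)) :
    (ContinuousAt g x ∧ ¬ ContinuousAt f x) ↔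
      (ContinuousAt g x ∧ m ≠ ⊥ ∧ (g x : EReal) = m ∧
        x ∈ ⋃ α ∈ {α : ℝ | (α : EReal) < m}, closure {y | f y < α}) := by
  refine and_congr_right fun hgc => ?_
  rw [continuousAt_iff_forall_notMem_closure_setOf_lt hf hfg hgc]
  push Not
  constructor
  · rintro ⟨α, hα, hx⟩
    have hgm : (g x : EReal) = m := (hm ▸ essInf_eq_of_mem_closure_setOf_lt hf hfg hgc hα hx).symm
    exact ⟨hgm ▸ EReal.coe_ne_bot _, hgm, mem_biUnion (hgm ▸ EReal.coe_lt_coe hα) hx⟩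
  · rintro ⟨-, hgm, hx⟩
    obtain ⟨α, hα, hx⟩ := mem_iUnion₂.1 hx
    exact ⟨α, EReal.coe_lt_coe_iff.1 (hgm ▸ hα), hx⟩

theorem stmt_13 {N : ℕ} (f g : EuclideanSpace ℝ (Fin N) → ℝ)
    (hf : ∀ α : ℝ, Convex ℝ {x | f x < α}) (hg : ∀ α : ℝ, Convex ℝ {x | g x < α})
    (hfg : f =ᵐ[volume] g) (m : EReal)
    (hm : m = essInf (fun x => (f x : EReal)) volume) (hmtop : m ≠ ⊤)
    (x : EuclideanSpace ℝ (Fin N)) :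
    (ContinuousAt g x ∧ ¬ ContinuousAt f x) ↔
      (ContinuousAt g x ∧ m ≠ ⊥ ∧ (g x : EReal) = m ∧
        x ∈ ⋃ α ∈ {α : ℝ | (α : EReal) < m}, closure {y | f y < α}) :=
  stmt_13_general f g hf hfg m hm x
end
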